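/- For any x, y ∈ ℝ^n, any k ∈ {1,...,n}, and any m with 1 ≤ m ≤ k, iso(x)_k ≥ (average of iso(y) over entries k−m+1,...,k) − ‖x − y‖_SW / ψ(m); and for any m with 1 ≤ m ≤ n−k+1, iso(x)_k ≤ (average of iso(y) over entries k,...,k+m−1) + ‖x − y‖_SW / ψ(m). -/

import Mathlib

open MeasureTheory Filter ProbabilityTheory

noncomputable section

/-- The isotonic (monotone nondecreasing) cone in `ℝ^n` with the Euclidean norm. -/
def monoCone (n : ℕ) : Set (EuclideanSpace ℝ (Fin n)) :=
  {v | ∀ i j : Fin n, i ≤ j → v i ≤ v j}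

open Classical in
/-- Euclidean projection onto the monotone cone (chosen minimizer of the distance). -/
def isoProj {n : ℕ} (x : EuclideanSpace ℝ (Fin n)) : EuclideanSpace ℝ (Fin n) :=
  if h : ∃ z ∈ monoCone n, ∀ w ∈ monoCone n, dist x z ≤ dist x w then h.choose else x

/-- The map `A_i` replacing entries `i` and `i+1` (0-based) by their common average. -/
def avgMap {n : ℕ} (i : ℕ) (x : EuclideanSpace ℝ (Fin n)) : EuclideanSpace ℝ (Fin n) :=
  WithLp.toLp 2 (fun j => if h : i + 1 < n then
      (if (j : ℕ) = i ∨ (j : ℕ) = i + 1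
        then (x ⟨i, by omega⟩ + x ⟨i + 1, h⟩) / 2 else x j)
    else x j)

/-- One step of neighbor pooling: average entries `i`, `i+1` if they violate monotonicity. -/
def isoStep {n : ℕ} (i : ℕ) (x : EuclideanSpace ℝ (Fin n)) : EuclideanSpace ℝ (Fin n) :=
  if h : i + 1 < n then
    (if x ⟨i, by omega⟩ ≤ x ⟨i + 1, h⟩ then x else avgMap i x)
  else x

/-- Nonincreasing under neighbor averaging. -/
def NUNA {n : ℕ} (N : Seminorm ℝ (EuclideanSpace ℝ (Fin n))) : Prop :=
  ∀ x : EuclideanSpace ℝ (Fin n), ∀ i : ℕ, i + 1 < n → N (avgMap i x) ≤ N x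

/-- Average of the `m` entries of `x` starting at (0-based) index `a`. -/
def wavg {n : ℕ} (x : EuclideanSpace ℝ (Fin n)) (a m : ℕ) : ℝ :=
  (∑ t ∈ Finset.range m, if h : a + t < n then x ⟨a + t, h⟩ else 0) / m

/-- The sliding window seminorm with weight function `ψ`. -/
def swNorm {n : ℕ} (ψ : ℕ → ℝ) (x : EuclideanSpace ℝ (Fin n)) : ℝ :=
  sSup {r | ∃ a m : ℕ, 1 ≤ m ∧ a + m ≤ n ∧ r = |wavg x a m| * ψ m}

/-!
Write `u = iso x`, `v = iso y`, `N = ‖x - y‖_SW` and `g L = L / ψ L`. Instead of the contraction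
property we use the optimality conditions of the projection directly: the partial sums
`Q i = ∑_{t<i} (x - u)` are nonnegative and vanish at `n` and at every jump of `u`; likewise the
partial sums `P i` of `y - v`.

Let `j` be the first index after `k` with `Q j = 0`, so `u` is constant on `[k, j)`. For every
`z ≤ k` with `P z = 0` the sums over `[z, j)` satisfy
`∑ v ≤ ∑ y ≤ ∑ x + N g(j - z) ≤ ∑ u ≤ (j - z) u_k + N g(j - z)`.
Let `[p, q)` be the block of `v` containing the window start `a`. If `q > k`, then `v = v_k` on
`[p, k]` and the bound for `z = p` is the one to average; otherwise the bounds for `z = p` and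
`z = q` interpolate, by concavity of `g`, to a bound for `z = a`. Since `v` and `ψ` are
nondecreasing, averaging over `[z, j)` dominates averaging over the window `[a, k]`, with the
error term only improving. The second inequality is the first one for the reflected sequences
`t ↦ -x (n - 1 - t)`.
-/

open Finset
open scoped RealInnerProductSpace

def toSeq {n : ℕ} (x : EuclideanSpace ℝ (Fin n)) : ℕ → ℝ :=
  fun t => if h : t < n then x ⟨t, h⟩ else 0

theorem toSeq_of_lt {n : ℕ} (x : EuclideanSpace ℝ (Fin n)) {t : ℕ} (ht : t < n) :
    toSeq x t = x ⟨t, ht⟩ :=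
  dif_pos ht

theorem toSeq_sub {n : ℕ} (x y : EuclideanSpace ℝ (Fin n)) :
    toSeq (x - y) = toSeq x - toSeq y := by
  funext t
  by_cases ht : t < n <;> simp [toSeq, ht]

structure IsotonicKKT (n : ℕ) (x u : ℕ → ℝ) : Prop where
  mono : ∀ i j, i ≤ j → j < n → u i ≤ u j
  sum_nonneg : ∀ i ≤ n, 0 ≤ ∑ t ∈ range i, (x t - u t)
  sum_eq_zero : ∑ t ∈ range n, (x t - u t) = 0
  sum_eq_zero_of_lt : ∀ i, i + 1 < n → u i < u (i + 1) →
    ∑ t ∈ range (i + 1), (x t - u t) = 0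

def prefixInd (n i : ℕ) : EuclideanSpace ℝ (Fin n) :=
  WithLp.toLp 2 fun t => if (t : ℕ) < i then 1 else 0

theorem inner_prefixInd {n : ℕ} (x : EuclideanSpace ℝ (Fin n)) {i : ℕ} (hi : i ≤ n) :
    ⟪x, prefixInd n i⟫ = ∑ t ∈ range i, toSeq x t := by
  calc ⟪x, prefixInd n i⟫ = ∑ t ∈ range n, if t < i then toSeq x t else 0 := by
        rw [← Fin.sum_univ_eq_sum_range (fun t => if t < i then toSeq x t else 0)]
        simp [PiLp.inner_apply, prefixInd, toSeq]
    _ = ∑ t ∈ range i, toSeq x t := by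
        rw [← sum_filter]
        congr 1
        ext t
        simp only [mem_filter, mem_range]
        omega

theorem convex_monoCone (n : ℕ) : Convex ℝ (monoCone n) := by
  intro p hp q hq s t hs ht _ i j hij
  simpa using add_le_add (mul_le_mul_of_nonneg_left (hp i j hij) hs)
    (mul_le_mul_of_nonneg_left (hq i j hij) ht)

theorem isClosed_monoCone (n : ℕ) : IsClosed (monoCone n) := by
  simp only [monoCone, Set.ofPred_forall]
  exact isClosed_iInter fun i => isClosed_iInter fun j => isClosed_iInter fun _ =>
    isClosed_le (by fun_prop) (by fun_prop)

theorem isoProj_mem_and_inner_le {n : ℕ} (x : EuclideanSpace ℝ (Fin n)) :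
    isoProj x ∈ monoCone n ∧ ∀ w ∈ monoCone n, ⟪x - isoProj x, w - isoProj x⟫ ≤ 0 := by
  obtain ⟨z, hz, hzmin⟩ := exists_norm_eq_iInf_of_complete_convex ⟨0, fun _ _ _ => by simp⟩
    (isClosed_monoCone n).isComplete (convex_monoCone n) x
  have hbdd : BddBelow (Set.range fun w : monoCone n => ‖x - w‖) :=
    ⟨0, by rintro _ ⟨w, rfl⟩; positivity⟩
  have hex : ∃ z ∈ monoCone n, ∀ w ∈ monoCone n, dist x z ≤ dist x w :=
    ⟨z, hz, fun w hw => by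
      rw [dist_eq_norm, dist_eq_norm, hzmin]
      exact ciInf_le hbdd ⟨w, hw⟩⟩
  obtain ⟨hmem, hmin⟩ :
      isoProj x ∈ monoCone n ∧ ∀ w ∈ monoCone n, dist x (isoProj x) ≤ dist x w := by
    rw [isoProj, dif_pos hex]
    exact hex.choose_spec
  refine ⟨hmem, (norm_eq_iInf_iff_real_inner_le_zero (convex_monoCone n) hmem).1
    (le_antisymm ?_ (ciInf_le hbdd ⟨_, hmem⟩))⟩
  rw [← hzmin, ← dist_eq_norm, ← dist_eq_norm]
  exact hmin z hz

theorem add_smul_prefixInd_mem {n : ℕ} {u : EuclideanSpace ℝ (Fin n)} (hu : u ∈ monoCone n)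
    {i : ℕ} {s : ℝ} (hs : ∀ j₁ j₂ : Fin n, (j₁ : ℕ) < i → i ≤ (j₂ : ℕ) → s ≤ u j₂ - u j₁) :
    u + s • prefixInd n i ∈ monoCone n := by
  intro j₁ j₂ h
  have hu₁₂ := hu j₁ j₂ h
  have h' : (j₁ : ℕ) ≤ j₂ := h
  simp only [PiLp.add_apply, PiLp.smul_apply, prefixInd, smul_eq_mul]
  split_ifs with h₁ h₂ h₂
  · linarith
  · linarith [hs j₁ j₂ h₁ (by omega)]
  · omega
  · linarith

theorem smul_sum_sub_isoProj_nonpos {n : ℕ} (x : EuclideanSpace ℝ (Fin n)) {i : ℕ}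
    (hi : i ≤ n) {s : ℝ} (hs : ∀ j₁ j₂ : Fin n, (j₁ : ℕ) < i → i ≤ (j₂ : ℕ) →
      s ≤ isoProj x j₂ - isoProj x j₁) :
    s * ∑ t ∈ range i, (toSeq x t - toSeq (isoProj x) t) ≤ 0 := by
  obtain ⟨hmem, hinner⟩ := isoProj_mem_and_inner_le x
  have h := hinner _ (add_smul_prefixInd_mem hmem hs)
  rwa [add_sub_cancel_left, inner_smul_right, inner_prefixInd _ hi, toSeq_sub] at h

theorem isotonicKKT_isoProj {n : ℕ} (x : EuclideanSpace ℝ (Fin n)) :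
    IsotonicKKT n (toSeq x) (toSeq (isoProj x)) := by
  obtain ⟨hmem, -⟩ := isoProj_mem_and_inner_le x
  have hmono : ∀ j₁ j₂ : Fin n, (j₁ : ℕ) ≤ j₂ → isoProj x j₁ ≤ isoProj x j₂ := hmem
  have hnonneg : ∀ i ≤ n, 0 ≤ ∑ t ∈ range i, (toSeq x t - toSeq (isoProj x) t) :=
    fun i hi => by
    have := smul_sum_sub_isoProj_nonpos x hi (s := -1) fun j₁ j₂ _ _ => by
      linarith [hmono j₁ j₂ (by omega)]
    linarith
  refine ⟨fun i j hij hj => ?_, hnonneg, ?_, fun i hi hlt => ?_⟩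
  · rw [toSeq_of_lt _ (hij.trans_lt hj), toSeq_of_lt _ hj]
    exact hmono _ _ hij
  · have := smul_sum_sub_isoProj_nonpos x le_rfl (s := 1)
      fun _ j₂ _ h => absurd j₂.2 (by omega)
    linarith [hnonneg n le_rfl]
  · rw [toSeq_of_lt _ (by omega), toSeq_of_lt _ hi] at hlt
    have := smul_sum_sub_isoProj_nonpos x hi.le
      (s := isoProj x ⟨i + 1, hi⟩ - isoProj x ⟨i, by omega⟩) fun j₁ j₂ h₁ h₂ => by
        linarith [hmono j₁ ⟨i, by omega⟩ (by simp; omega),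
          hmono ⟨i + 1, hi⟩ j₂ (by simp; omega)]
    exact le_antisymm (nonpos_of_mul_nonpos_right this (by linarith)) (hnonneg _ hi.le)

-- `‖z‖_SW ≤ N`, with the window averages multiplied out.
def WindowSumsLE (n : ℕ) (ψ : ℕ → ℝ) (N : ℝ) (z : ℕ → ℝ) : Prop :=
  ∀ a m, 0 < m → a + m ≤ n → |∑ t ∈ Ico a (a + m), z t| ≤ N * (m / ψ m)

theorem wavg_eq_sum_Ico {n : ℕ} (x : EuclideanSpace ℝ (Fin n)) (a m : ℕ) :
    wavg x a m = (∑ t ∈ Ico a (a + m), toSeq x t) / m := by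
  rw [wavg, sum_Ico_eq_sum_range, Nat.add_sub_cancel_left]
  rfl

theorem abs_wavg_mul_le_swNorm {n : ℕ} (ψ : ℕ → ℝ) (x : EuclideanSpace ℝ (Fin n)) {a m : ℕ}
    (hm : 1 ≤ m) (ham : a + m ≤ n) : |wavg x a m| * ψ m ≤ swNorm ψ x := by
  refine le_csSup (Set.Finite.bddAbove ?_) ⟨a, m, hm, ham, rfl⟩
  refine (Set.finite_range fun p : Fin (n + 1) × Fin (n + 1) =>
    |wavg x p.1 p.2| * ψ p.2).subset ?_
  rintro _ ⟨a, m, -, ham, rfl⟩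
  exact ⟨(⟨a, by omega⟩, ⟨m, by omega⟩), rfl⟩

theorem windowSumsLE_swNorm {n : ℕ} {ψ : ℕ → ℝ} (hψpos : ∀ m, 1 ≤ m → m ≤ n → 0 < ψ m)
    (z : EuclideanSpace ℝ (Fin n)) : WindowSumsLE n ψ (swNorm ψ z) (toSeq z) := by
  intro a m hm ham
  have hψm := hψpos m hm (by omega)
  have h := abs_wavg_mul_le_swNorm ψ z hm ham
  rw [wavg_eq_sum_Ico, abs_div, Nat.abs_cast] at h
  calc |∑ t ∈ Ico a (a + m), toSeq z t|
      = |∑ t ∈ Ico a (a + m), toSeq z t| / m * ψ m * (m / ψ m) := by field_simp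
    _ ≤ swNorm ψ z * (m / ψ m) := by gcongr

theorem WindowSumsLE.nonneg {n : ℕ} {ψ : ℕ → ℝ} {N : ℝ} {z : ℕ → ℝ}
    (h : WindowSumsLE n ψ N z) (hn : 0 < n) (hψ : 0 < ψ 1) : 0 ≤ N := by
  have := (abs_nonneg _).trans (h 0 1 one_pos hn)
  exact nonneg_of_mul_nonneg_left this (by simpa using hψ)

theorem three_point_of_concave {g : ℕ → ℝ} {n : ℕ}
    (hg : ∀ i, 1 ≤ i → i + 2 ≤ n → g (i + 2) - g (i + 1) ≤ g (i + 1) - g i)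
    {ℓ s t : ℕ} (hℓ : 1 ≤ ℓ) (hn : ℓ + s + t ≤ n) :
    s * g (ℓ + s + t) + t * g ℓ ≤ (s + t) * g (ℓ + s) := by
  rcases Nat.eq_zero_or_pos t with rfl | ht
  · simp
  have hd : AntitoneOn (fun i => g (i + 1) - g i) (Set.Icc 1 (n - 1)) :=
    antitoneOn_of_succ_le Set.ordConnected_Icc fun i _ hi hi' => by
      simp only [Order.succ_eq_add_one, Set.mem_Icc] at hi hi'
      exact hg i hi.1 (by omega)
  have hleft : s * (g (ℓ + s + 1) - g (ℓ + s)) ≤ g (ℓ + s) - g ℓ := by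
    rw [← sum_Ico_sub g (Nat.le_add_right ℓ s)]
    have h := card_nsmul_le_sum (Ico ℓ (ℓ + s)) (fun i => g (i + 1) - g i) _ fun i hi => by
      rw [mem_Ico] at hi
      exact hd ⟨by omega, by omega⟩ ⟨by omega, by omega⟩ hi.2.le
    rwa [Nat.card_Ico, add_tsub_cancel_left, nsmul_eq_mul] at h
  have hright : g (ℓ + s + t) - g (ℓ + s) ≤ t * (g (ℓ + s + 1) - g (ℓ + s)) := by
    rw [← sum_Ico_sub g (Nat.le_add_right (ℓ + s) t)]
    have h := sum_le_card_nsmul (Ico (ℓ + s) (ℓ + s + t)) (fun i => g (i + 1) - g i) _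
      fun i hi => by
        rw [mem_Ico] at hi
        exact hd ⟨by omega, by omega⟩ ⟨by omega, by omega⟩ hi.1
    rwa [Nat.card_Ico, add_tsub_cancel_left, nsmul_eq_mul] at h
  nlinarith [mul_le_mul_of_nonneg_left hleft (Nat.cast_nonneg t : (0:ℝ) ≤ t),
    mul_le_mul_of_nonneg_left hright (Nat.cast_nonneg s : (0:ℝ) ≤ s)]

theorem div_concave_step {n : ℕ} {ψ : ℕ → ℝ}
    (hψconc : ∀ m, 2 ≤ m → m + 1 ≤ n →
      (((m : ℝ) - 1) / ψ (m - 1) + ((m : ℝ) + 1) / ψ (m + 1)) / 2 ≤ (m : ℝ) / ψ m)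
    (i : ℕ) (hi : 1 ≤ i) (hin : i + 2 ≤ n) :
    ((i + 2 : ℕ) : ℝ) / ψ (i + 2) - ((i + 1 : ℕ) : ℝ) / ψ (i + 1)
      ≤ ((i + 1 : ℕ) : ℝ) / ψ (i + 1) - (i : ℝ) / ψ i := by
  have h := hψconc (i + 1) (by omega) (by omega)
  simp only [Nat.add_sub_cancel, Nat.cast_add, Nat.cast_one, add_sub_cancel_right] at h
  push_cast
  rw [add_assoc, one_add_one_eq_two] at h
  linarith

theorem IsotonicKKT.exists_block {n : ℕ} {x u : ℕ → ℝ} (h : IsotonicKKT n x u) {a : ℕ}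
    (ha : a < n) :
    ∃ p q, p ≤ a ∧ a < q ∧ q ≤ n ∧ ∑ t ∈ range p, (x t - u t) = 0 ∧
      ∑ t ∈ range q, (x t - u t) = 0 ∧ ∀ t ∈ Ico p q, u t = u a := by
  classical
  have hex : ∃ q, a < q ∧ ∑ t ∈ range q, (x t - u t) = 0 := ⟨n, ha, h.sum_eq_zero⟩
  obtain ⟨haq, hq⟩ := Nat.find_spec hex
  set q := Nat.find hex
  set p := Nat.findGreatest (fun i => ∑ t ∈ range i, (x t - u t) = 0) a
  have hpa : p ≤ a := Nat.findGreatest_le a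
  have hne : ∀ i, p < i → i < q → ∑ t ∈ range i, (x t - u t) ≠ 0 := fun i hpi hiq hi =>
    if hia : i ≤ a then Nat.findGreatest_is_greatest hpi hia hi
    else Nat.find_min hex hiq ⟨by omega, hi⟩
  have hqn : q ≤ n := Nat.find_min' hex ⟨ha, h.sum_eq_zero⟩
  have hconst : ∀ t, p ≤ t → t < q → u t = u p := by
    intro t hpt
    induction t, hpt using Nat.le_induction with
    | base => exact fun _ => rfl
    | succ t hpt ih =>
      intro htq
      rw [← ih (by omega)]
      by_contra hjump
      have hlt := lt_of_le_of_ne (h.mono t (t + 1) (by omega) (by omega)) (Ne.symm hjump)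
      exact hne (t + 1) (by omega) htq (h.sum_eq_zero_of_lt t (by omega) hlt)
  have hp : ∑ t ∈ range p, (x t - u t) = 0 :=
    Nat.findGreatest_spec (P := fun i => ∑ t ∈ range i, (x t - u t) = 0) (Nat.zero_le a)
      (by simp)
  refine ⟨p, q, hpa, haq, hqn, hp, hq, fun t ht => ?_⟩
  rw [mem_Ico] at ht
  rw [hconst t ht.1 ht.2, hconst a hpa haq]

theorem IsotonicKKT.sum_Ico_le {n : ℕ} {ψ : ℕ → ℝ} {N : ℝ} {x y u v : ℕ → ℝ}
    (hu : IsotonicKKT n x u) (hv : IsotonicKKT n y v) (hW : WindowSumsLE n ψ N (x - y))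
    {z j : ℕ} (hzj : z < j) (hjn : j ≤ n) (hz : ∑ t ∈ range z, (y t - v t) = 0)
    (hj : ∑ t ∈ range j, (x t - u t) = 0) {c : ℝ} (hc : ∀ t ∈ Ico z j, u t ≤ c) :
    ∑ t ∈ Ico z j, v t ≤ (j - z : ℕ) * c + N * ((j - z : ℕ) / ψ (j - z)) := by
  have hvy : 0 ≤ ∑ t ∈ Ico z j, (y t - v t) := by
    rw [sum_Ico_eq_sub _ hzj.le, hz, sub_zero]
    exact hv.sum_nonneg j hjn
  have hyx : ∑ t ∈ Ico z j, (y t - x t) ≤ N * ((j - z : ℕ) / ψ (j - z)) := by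
    have := hW z (j - z) (by omega) (by omega)
    rw [Nat.add_sub_cancel' hzj.le, ← abs_neg, ← sum_neg_distrib] at this
    simpa using (le_abs_self _).trans this
  have hxu : ∑ t ∈ Ico z j, (x t - u t) ≤ 0 := by
    rw [sum_Ico_eq_sub _ hzj.le, hj, zero_sub, neg_nonpos]
    exact hu.sum_nonneg z (by omega)
  have huc : ∑ t ∈ Ico z j, u t ≤ (j - z : ℕ) * c := by
    simpa only [Nat.card_Ico, nsmul_eq_mul] using sum_le_card_nsmul _ _ _ hc
  simp only [sum_sub_distrib] at hvy hyx hxu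
  linarith

theorem sum_Ico_le_of_two_blocks {n : ℕ} {ψ : ℕ → ℝ}
    (hψconc : ∀ m, 2 ≤ m → m + 1 ≤ n →
      (((m : ℝ) - 1) / ψ (m - 1) + ((m : ℝ) + 1) / ψ (m + 1)) / 2 ≤ (m : ℝ) / ψ m)
    {v : ℕ → ℝ} {c N : ℝ} (hN : 0 ≤ N) {p a q j : ℕ} (hpa : p ≤ a) (haq : a < q)
    (hqj : q < j) (hjn : j ≤ n) {b : ℝ} (hconst : ∀ t ∈ Ico p q, v t = b)
    (hp : ∑ t ∈ Ico p j, v t ≤ (j - p : ℕ) * c + N * ((j - p : ℕ) / ψ (j - p)))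
    (hq : ∑ t ∈ Ico q j, v t ≤ (j - q : ℕ) * c + N * ((j - q : ℕ) / ψ (j - q))) :
    ∑ t ∈ Ico a j, v t ≤ (j - a : ℕ) * c + N * ((j - a : ℕ) / ψ (j - a)) := by
  -- `j - a` is the mean of `j - p` and `j - q` with weights `q - a` and `a - p`.
  have hconc := three_point_of_concave (g := fun m => (m : ℝ) / ψ m) (div_concave_step hψconc)
    (ℓ := j - q) (s := q - a) (t := a - p) (by omega) (by omega)
  rw [show j - q + (q - a) + (a - p) = j - p by omega, show j - q + (q - a) = j - a by omega]
    at hconc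
  have hsum : ∀ i ∈ Icc p q, ∑ t ∈ Ico i j, v t = (q - i : ℕ) * b + ∑ t ∈ Ico q j, v t :=
    fun i hi => by
      rw [mem_Icc] at hi
      rw [← sum_Ico_consecutive _ hi.2 hqj.le, sum_congr rfl fun t ht => hconst t ?_]
      · simp
      · rw [mem_Ico] at ht ⊢; omega
  rw [hsum p (mem_Icc.2 ⟨le_rfl, by omega⟩)] at hp
  rw [hsum a (mem_Icc.2 ⟨hpa, haq.le⟩)]
  have hα : (0 : ℝ) < (q - a : ℕ) := by exact_mod_cast (by omega : 0 < q - a)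
  have hβ : (0 : ℝ) ≤ (a - p : ℕ) := Nat.cast_nonneg _
  simp only [Nat.cast_sub hpa, Nat.cast_sub haq.le, Nat.cast_sub hqj.le,
    Nat.cast_sub (hpa.trans haq.le), Nat.cast_sub (haq.trans hqj).le,
    Nat.cast_sub ((hpa.trans haq.le).trans hqj.le)] at hp hq hconc hα hβ ⊢
  refine le_of_mul_le_mul_left ?_ (add_pos_of_pos_of_nonneg hα hβ)
  nlinarith [mul_le_mul_of_nonneg_left hp hα.le, mul_le_mul_of_nonneg_left hq hβ,
    mul_le_mul_of_nonneg_left hconc hN]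

theorem monotoneOn_Icc_of_le_succ {n : ℕ} {ψ : ℕ → ℝ}
    (hψmono : ∀ m, 1 ≤ m → m + 1 ≤ n → ψ m ≤ ψ (m + 1)) : MonotoneOn ψ (Set.Icc 1 n) :=
  monotoneOn_of_le_succ Set.ordConnected_Icc fun i _ hi hi' => by
    simp only [Order.succ_eq_add_one, Set.mem_Icc] at hi hi'
    exact hψmono i hi.1 hi'.2

theorem avg_le_of_sum_Ico_le {n : ℕ} {ψ : ℕ → ℝ} (hψpos : ∀ m, 1 ≤ m → m ≤ n → 0 < ψ m)
    (hψmono : ∀ m, 1 ≤ m → m + 1 ≤ n → ψ m ≤ ψ (m + 1))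
    {v : ℕ → ℝ} {w c N : ℝ} (hN : 0 ≤ N) {z a m j : ℕ} (hm : 0 < m) (hza : z ≤ a)
    (hmj : a + m ≤ j) (hjn : j ≤ n) (hin : ∀ t ∈ Ico a (a + m), v t ≤ w)
    (hleft : ∀ t ∈ Ico z a, w ≤ v t) (hright : ∀ t ∈ Ico (a + m) j, w ≤ v t)
    (hsum : ∑ t ∈ Ico z j, v t ≤ (j - z : ℕ) * c + N * ((j - z : ℕ) / ψ (j - z))) :
    (∑ t ∈ Ico a (a + m), v t) / m ≤ c + N / ψ m := by
  set S := ∑ t ∈ Ico a (a + m), v t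
  have hm' : (0 : ℝ) < m := by exact_mod_cast hm
  have hSw : S / m ≤ w := by
    have := sum_le_card_nsmul _ _ _ hin
    rw [Nat.card_Ico, Nat.add_sub_cancel_left, nsmul_eq_mul] at this
    rwa [div_le_iff₀ hm', mul_comm]
  have hlow : ((j - z : ℕ) : ℝ) * (S / m) ≤ ∑ t ∈ Ico z j, v t := by
    have h₁ := card_nsmul_le_sum _ _ _ hleft
    have h₂ := card_nsmul_le_sum _ _ _ hright
    rw [Nat.card_Ico, nsmul_eq_mul] at h₁ h₂
    rw [← sum_Ico_consecutive _ hza (by omega : a ≤ j), ← sum_Ico_consecutive _ (by omega) hmj,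
      show j - z = (a - z) + m + (j - (a + m)) by omega]
    push_cast
    rw [add_mul, add_mul, mul_div_cancel₀ S hm'.ne']
    linarith [mul_le_mul_of_nonneg_left hSw (Nat.cast_nonneg (α := ℝ) (a - z)),
      mul_le_mul_of_nonneg_left hSw (Nat.cast_nonneg (α := ℝ) (j - (a + m)))]
  have hL : (0 : ℝ) < (j - z : ℕ) := by exact_mod_cast (by omega : 0 < j - z)
  have hSc : S / m ≤ c + N / ψ (j - z) := by
    refine le_of_mul_le_mul_left ?_ hL
    calc ((j - z : ℕ) : ℝ) * (S / m) ≤ (j - z : ℕ) * c + N * ((j - z : ℕ) / ψ (j - z)) :=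
          hlow.trans hsum
      _ = (j - z : ℕ) * (c + N / ψ (j - z)) := by ring
  have hψm : N / ψ (j - z) ≤ N / ψ m :=
    div_le_div_of_nonneg_left hN (hψpos m hm (by omega))
      (monotoneOn_Icc_of_le_succ hψmono ⟨hm, by omega⟩ ⟨by omega, by omega⟩ (by omega))
  linarith

theorem IsotonicKKT.avg_le {n : ℕ} {ψ : ℕ → ℝ} {N : ℝ} {x y u v : ℕ → ℝ}
    (hψpos : ∀ m, 1 ≤ m → m ≤ n → 0 < ψ m)
    (hψmono : ∀ m, 1 ≤ m → m + 1 ≤ n → ψ m ≤ ψ (m + 1))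
    (hψconc : ∀ m, 2 ≤ m → m + 1 ≤ n →
      (((m : ℝ) - 1) / ψ (m - 1) + ((m : ℝ) + 1) / ψ (m + 1)) / 2 ≤ (m : ℝ) / ψ m)
    (hu : IsotonicKKT n x u) (hv : IsotonicKKT n y v) (hW : WindowSumsLE n ψ N (x - y))
    {a m k : ℕ} (hm : 0 < m) (ham : a + m = k + 1) (hk : k < n) :
    (∑ t ∈ Ico a (a + m), v t) / m ≤ u k + N / ψ m := by
  have hN := hW.nonneg (by omega) (hψpos 1 le_rfl (by omega))
  -- `[p₀, j)` is the block of `u` containing `k`, and `[p, q)` the block of `v` containing `a`.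
  obtain ⟨p₀, j, hp₀k, hkj, hjn, -, hj, hu_const⟩ := hu.exists_block hk
  obtain ⟨p, q, hpa, haq, hqn, hp, hq, hv_const⟩ := hv.exists_block (a := a) (by omega)
  have hule : ∀ z, ∀ t ∈ Ico z j, u t ≤ u k := fun z t ht => by
    rw [mem_Ico] at ht
    rcases le_or_gt t k with htk | hkt
    · exact hu.mono t k htk hk
    · exact (hu_const t (mem_Ico.2 ⟨by omega, ht.2⟩)).le
  have hin : ∀ t ∈ Ico a (a + m), v t ≤ v k := fun t ht => by
    rw [mem_Ico] at ht
    exact hv.mono t k (by omega) hk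
  have hright : ∀ t ∈ Ico (a + m) j, v k ≤ v t := fun t ht => by
    rw [mem_Ico] at ht
    exact hv.mono k t (by omega) (by omega)
  have hBp := hu.sum_Ico_le hv hW (by omega) hjn hp hj (hule p)
  rcases le_or_gt q k with hqk | hkq
  · have hBq := hu.sum_Ico_le hv hW (by omega) hjn hq hj (hule q)
    have hBa := sum_Ico_le_of_two_blocks hψconc hN hpa haq (by omega) hjn hv_const hBp hBq
    exact avg_le_of_sum_Ico_le hψpos hψmono hN hm le_rfl (by omega) hjn hin (by simp) hright hBa
  · refine avg_le_of_sum_Ico_le hψpos hψmono hN hm hpa (by omega) hjn hin (fun t ht => ?_)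
      hright hBp
    rw [mem_Ico] at ht
    rw [hv_const t (mem_Ico.2 ⟨ht.1, by omega⟩), hv_const k (mem_Ico.2 ⟨by omega, hkq⟩)]

def negReflect (n : ℕ) (f : ℕ → ℝ) : ℕ → ℝ := fun t => -f (n - 1 - t)

theorem negReflect_sub (n : ℕ) (f g : ℕ → ℝ) :
    negReflect n f - negReflect n g = negReflect n (f - g) := by
  funext t
  simp only [negReflect, Pi.sub_apply]
  ring

theorem sum_Ico_negReflect {n : ℕ} (f : ℕ → ℝ) (a : ℕ) {b : ℕ} (hb : b ≤ n) :
    ∑ t ∈ Ico a b, negReflect n f t = -∑ t ∈ Ico (n - b) (n - a), f t := by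
  rcases n with _ | n
  · simp [Nat.le_zero.1 hb]
  · simp only [negReflect, sum_neg_distrib, Nat.add_sub_cancel]
    rw [sum_Ico_reflect f a (by omega)]

theorem WindowSumsLE.reflect {n : ℕ} {ψ : ℕ → ℝ} {N : ℝ} {z : ℕ → ℝ}
    (h : WindowSumsLE n ψ N z) : WindowSumsLE n ψ N (negReflect n z) := by
  intro a m hm ham
  rw [sum_Ico_negReflect z a ham, abs_neg]
  have := h (n - (a + m)) m hm (by omega)
  rwa [show n - (a + m) + m = n - a by omega] at this

theorem IsotonicKKT.reflect {n : ℕ} {x u : ℕ → ℝ} (h : IsotonicKKT n x u) :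
    IsotonicKKT n (negReflect n x) (negReflect n u) := by
  have hsum : ∀ i ≤ n, ∑ t ∈ range i, (negReflect n x t - negReflect n u t) =
      ∑ t ∈ range (n - i), (x t - u t) := fun i hi => by
    have := sum_Ico_negReflect (x - u) 0 hi
    rw [← negReflect_sub, Nat.sub_zero, sum_Ico_eq_sub _ (Nat.sub_le n i)] at this
    simp only [Pi.sub_apply, ← range_eq_Ico, h.sum_eq_zero] at this
    rw [this, zero_sub, neg_neg]
  refine ⟨fun i j hij hj => neg_le_neg (h.mono _ _ (by omega) (by omega)),
    fun i hi => hsum i hi ▸ h.sum_nonneg _ (Nat.sub_le n i),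
    by rw [hsum n le_rfl, Nat.sub_self, sum_range_zero], fun i hi hlt => ?_⟩
  rw [hsum _ hi.le]
  simp only [negReflect, neg_lt_neg_iff] at hlt
  have hidx : n - 1 - (i + 1) + 1 = n - (i + 1) := by omega
  have := h.sum_eq_zero_of_lt (n - 1 - (i + 1)) (by omega)
    (by rwa [hidx, show n - (i + 1) = n - 1 - i by omega])
  rwa [hidx] at this

theorem IsotonicKKT.le_avg {n : ℕ} {ψ : ℕ → ℝ} {N : ℝ} {x y u v : ℕ → ℝ}
    (hψpos : ∀ m, 1 ≤ m → m ≤ n → 0 < ψ m)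
    (hψmono : ∀ m, 1 ≤ m → m + 1 ≤ n → ψ m ≤ ψ (m + 1))
    (hψconc : ∀ m, 2 ≤ m → m + 1 ≤ n →
      (((m : ℝ) - 1) / ψ (m - 1) + ((m : ℝ) + 1) / ψ (m + 1)) / 2 ≤ (m : ℝ) / ψ m)
    (hu : IsotonicKKT n x u) (hv : IsotonicKKT n y v) (hW : WindowSumsLE n ψ N (x - y))
    {k m : ℕ} (hm : 0 < m) (hkm : k + m ≤ n) :
    u k ≤ (∑ t ∈ Ico k (k + m), v t) / m + N / ψ m := by
  have hW' : WindowSumsLE n ψ N (negReflect n x - negReflect n y) := by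
    rw [negReflect_sub]
    exact hW.reflect
  have h := hu.reflect.avg_le hψpos hψmono hψconc hv.reflect hW' (a := n - (k + m))
    (k := n - 1 - k) hm (by omega) (by omega)
  rw [sum_Ico_negReflect v _ (by omega), show n - (n - (k + m) + m) = k by omega,
    show n - (n - (k + m)) = k + m by omega, negReflect, show n - 1 - (n - 1 - k) = k by omega,
    neg_div] at h
  linarith

theorem stmt12 (n : ℕ) (ψ : ℕ → ℝ)
    (hψpos : ∀ m, 1 ≤ m → m ≤ n → 0 < ψ m)
    (hψmono : ∀ m, 1 ≤ m → m + 1 ≤ n → ψ m ≤ ψ (m + 1))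
    (hψconc : ∀ m, 2 ≤ m → m + 1 ≤ n →
      (((m : ℝ) - 1) / ψ (m - 1) + ((m : ℝ) + 1) / ψ (m + 1)) / 2 ≤ (m : ℝ) / ψ m)
    (x y : EuclideanSpace ℝ (Fin n)) (k : ℕ) (hk : k < n) :
    (∀ m : ℕ, 1 ≤ m → m ≤ k + 1 →
      wavg (isoProj y) (k + 1 - m) m - swNorm ψ (x - y) / ψ m ≤ isoProj x ⟨k, hk⟩) ∧
    (∀ m : ℕ, 1 ≤ m → m ≤ n - k →
      isoProj x ⟨k, hk⟩ ≤ wavg (isoProj y) k m + swNorm ψ (x - y) / ψ m) := by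
  have hW : WindowSumsLE n ψ (swNorm ψ (x - y)) (toSeq x - toSeq y) :=
    toSeq_sub x y ▸ windowSumsLE_swNorm hψpos (x - y)
  have hx := isotonicKKT_isoProj x
  have hy := isotonicKKT_isoProj y
  rw [← toSeq_of_lt _ hk]
  refine ⟨fun m hm hmk => ?_, fun m hm hmk => ?_⟩
  · rw [wavg_eq_sum_Ico, sub_le_iff_le_add]
    exact hx.avg_le hψpos hψmono hψconc hy hW hm (by omega) hk
  · rw [wavg_eq_sum_Ico]
    exact hx.le_avg hψpos hψmono hψconc hy hW hm (by omega)
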